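/- Let ε > 0, n > 1/(8ε), p prime, and B = [X, Y, Z] a brick in H_n with |B| > p^(3n/2 + 3/4 + ε(2n+1)). Then there exist a, b ∈ F_pⁿ such that the entire coset [a, b, F_p] is contained in B·B. -/

import Mathlib

open scoped Pointwise

def Heis (p n : ℕ) : Type := (Fin n → ZMod p) × (Fin n → ZMod p) × ZMod p

namespace Heis

variable {p n : ℕ}

instance : Mul (Heis p n) :=
  ⟨fun a b => (a.1 + b.1, a.2.1 + b.2.1, (∑ i, a.1 i * b.2.1 i) + a.2.2 + b.2.2)⟩
instance : One (Heis p n) := ⟨((0 : Fin n → ZMod p), (0 : Fin n → ZMod p), (0 : ZMod p))⟩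
instance : Inv (Heis p n) :=
  ⟨fun a => (-a.1, -a.2.1, (∑ i, a.1 i * a.2.1 i) - a.2.2)⟩

lemma one_def : (1 : Heis p n) = ((0 : Fin n → ZMod p), (0 : Fin n → ZMod p), (0 : ZMod p)) := rfl

lemma inv_def (a : Heis p n) :
    a⁻¹ = (-a.1, -a.2.1, (∑ i, a.1 i * a.2.1 i) - a.2.2) := rfl

lemma mul_def (a b : Heis p n) :
    a * b = (a.1 + b.1, a.2.1 + b.2.1, (∑ i, a.1 i * b.2.1 i) + a.2.2 + b.2.2) := rfl

instance : Group (Heis p n) :=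
  Group.ofLeftAxioms
    (fun a b c => by
      rw [mul_def, mul_def, mul_def a, mul_def b]
      refine Prod.ext ?_ (Prod.ext ?_ ?_) <;>
        simp [Finset.sum_add_distrib, add_mul, mul_add] <;> ring)
    (fun a => by
      rw [mul_def, one_def]
      refine Prod.ext ?_ (Prod.ext ?_ ?_) <;>
        simp)
    (fun a => by
      rw [mul_def, inv_def, one_def]
      refine Prod.ext ?_ (Prod.ext ?_ ?_) <;>
        simp [Finset.sum_add_distrib, neg_mul, mul_comm] <;> ring)

instance [NeZero p] : Fintype (Heis p n) :=
  inferInstanceAs (Fintype ((Fin n → ZMod p) × (Fin n → ZMod p) × ZMod p))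

instance : DecidableEq (Heis p n) :=
  inferInstanceAs (DecidableEq ((Fin n → ZMod p) × (Fin n → ZMod p) × ZMod p))

end Heis

/-!
Pigeonholing in each coordinate gives `aᵢ, bᵢ` for which `Aᵢ = Xᵢ ∩ (aᵢ - Xᵢ)` and
`Bᵢ = Yᵢ ∩ (bᵢ - Yᵢ)` satisfy `|Xᵢ|² ≤ p |Aᵢ|` and `|Yᵢ|² ≤ p |Bᵢ|`. For `uᵢ ∈ Aᵢ`, `vᵢ ∈ Bᵢ` and
`z, z' ∈ Z` both factors of `[u, b - v, z] · [a - u, v, z'] = [a, b, ⟨u, v⟩ + z + z']` lie in the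
brick, so it suffices that every `t ∈ 𝔽_p` is of the form `⟨u, v⟩ + z + z'`.

The number of such representations of `t` is `p⁻¹ ∑_c ψ(-ct) ∏ᵢ Sᵢ(c) Ẑ(c)²`, with
`Sᵢ(c) = ∑_{x ∈ Aᵢ, y ∈ Bᵢ} ψ(cxy)` and `Ẑ(c) = ∑_{z ∈ Z} ψ(cz)`. The term `c = 0` is
`∏ᵢ |Aᵢ||Bᵢ| · |Z|²`; for `c ≠ 0` Cauchy–Schwarz and Parseval give `|Sᵢ(c)|² ≤ p |Aᵢ||Bᵢ|`, and
`∑_c |Ẑ(c)|² = p |Z|`. Hence `t` is represented as soon as `∏ᵢ |Aᵢ||Bᵢ| · |Z|² > p^(n+2)`, and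
this follows from the size of the brick because `|B|² ≤ p^(2n) ∏ᵢ |Aᵢ||Bᵢ| · |Z|²`.
-/

open Finset

section Pigeonhole

variable {G : Type*} [AddCommGroup G] [Fintype G] [DecidableEq G]

theorem Finset.sum_card_filter_sub_mem (X : Finset G) :
    ∑ a : G, #{x ∈ X | a - x ∈ X} = #X ^ 2 := by
  simp_rw [card_filter]
  rw [sum_comm, sq, ← smul_eq_mul, ← sum_const]
  refine sum_congr rfl fun x _ => ?_
  rw [← Equiv.sum_comp (Equiv.addRight x)]
  simp

theorem Finset.exists_card_sq_le_card_mul_card_filter_sub_mem (X : Finset G) :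
    ∃ a : G, #X ^ 2 ≤ Fintype.card G * #{x ∈ X | a - x ∈ X} := by
  obtain ⟨a, -, ha⟩ := exists_le_of_sum_le univ_nonempty (f := fun _ : G => #X ^ 2)
    (g := fun a => Fintype.card G * #{x ∈ X | a - x ∈ X})
    (by rw [← mul_sum, sum_card_filter_sub_mem, sum_const, card_univ, smul_eq_mul])
  exact ⟨a, ha⟩

end Pigeonhole

namespace AddChar

lemma map_sum_eq_prod {A M ι : Type*} [AddCommMonoid A] [CommMonoid M] (ψ : AddChar A M)
    (s : Finset ι) (f : ι → A) : ψ (∑ i ∈ s, f i) = ∏ i ∈ s, ψ (f i) := by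
  induction s using Finset.cons_induction <;> simp_all [map_add_eq_mul]

lemma exists_isPrimitive (F : Type*) [Field F] [Finite F] :
    ∃ ψ : AddChar F ℂ, ψ.IsPrimitive := by
  obtain ⟨ψ, hψ⟩ := exists_apply_ne_zero.mpr (one_ne_zero (α := F))
  exact ⟨ψ, IsPrimitive.of_ne_one fun h => hψ (by rw [h, one_apply])⟩

lemma sum_piFinset_product_mul_sum_mul_add_add {R ι : Type*} [CommRing R] [Fintype ι]
    [DecidableEq ι] (ψ : AddChar R ℂ) (A B : ι → Finset R) (Z : Finset R) (c : R) :
    ∑ w ∈ Fintype.piFinset (fun i => A i ×ˢ B i) ×ˢ (Z ×ˢ Z),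
        ψ (c * (∑ i, (w.1 i).1 * (w.1 i).2 + w.2.1 + w.2.2)) =
      (∏ i, ∑ x ∈ A i, ∑ y ∈ B i, ψ (c * (x * y))) * (∑ z ∈ Z, ψ (c * z)) ^ 2 := by
  have hprod : ∏ i, ∑ x ∈ A i, ∑ y ∈ B i, ψ (c * (x * y)) =
      ∑ g ∈ Fintype.piFinset (fun i => A i ×ˢ B i), ∏ i, ψ (c * ((g i).1 * (g i).2)) := by
    rw [← prod_univ_sum (fun i => A i ×ˢ B i) fun _ w => ψ (c * (w.1 * w.2))]
    exact prod_congr rfl fun i _ => (sum_product' _ _ _).symm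
  rw [hprod]
  simp_rw [sum_product, mul_add, map_add_eq_mul, mul_sum, map_sum_eq_prod, sq, sum_mul_sum,
    mul_sum, mul_assoc]

section CommRing

variable {R : Type*} [CommRing R] [Fintype R] [DecidableEq R] {ψ : AddChar R ℂ}

lemma sum_norm_sum_mul_sq (hψ : ψ.IsPrimitive) (s : Finset R) :
    ∑ x : R, ‖∑ y ∈ s, ψ (x * y)‖ ^ 2 = Fintype.card R * #s := by
  have hsq (x : R) :
      (‖∑ y ∈ s, ψ (x * y)‖ ^ 2 : ℂ) = ∑ y ∈ s, ∑ y' ∈ s, ψ (x * (y - y')) := by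
    rw [← Complex.mul_conj', map_sum, sum_mul_sum]
    simp_rw [← map_neg_eq_conj, ← map_add_eq_mul, mul_sub, sub_eq_add_neg]
  suffices (∑ x : R, ‖∑ y ∈ s, ψ (x * y)‖ ^ 2 : ℂ) = Fintype.card R * #s by exact_mod_cast this
  calc (∑ x : R, ‖∑ y ∈ s, ψ (x * y)‖ ^ 2 : ℂ)
      = ∑ y ∈ s, ∑ y' ∈ s, ∑ x : R, ψ (x * (y - y')) := by
        simp_rw [hsq]; rw [sum_comm]; exact sum_congr rfl fun _ _ => sum_comm
    _ = ∑ y ∈ s, (Fintype.card R : ℂ) := by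
        simp_rw [sum_mulShift _ hψ, sub_eq_zero]; simp
    _ = Fintype.card R * #s := by simp [mul_comm]

lemma exists_mem_eq_of_sum_norm_lt (hψ : ψ.IsPrimitive) {α : Type*} (s : Finset α) (f : α → R)
    (h : ∑ c ∈ univ.erase 0, ‖∑ w ∈ s, ψ (c * f w)‖ < #s) (t : R) : ∃ w ∈ s, f w = t := by
  by_contra! hne
  have hzero : ∑ c : R, ψ (c * -t) * ∑ w ∈ s, ψ (c * f w) = 0 := by
    simp_rw [mul_sum, ← map_add_eq_mul, ← mul_add, sum_comm (s := univ), sum_mulShift _ hψ]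
    refine sum_eq_zero fun w hw => ?_
    rw [neg_add_eq_sub, if_neg (sub_ne_zero.mpr (hne w hw)), Nat.cast_zero]
  rw [← add_sum_erase _ _ (mem_univ 0), add_eq_zero_iff_eq_neg] at hzero
  simp only [zero_mul, map_zero_eq_one, one_mul, sum_const, nsmul_eq_mul, mul_one] at hzero
  refine h.not_ge ?_
  calc (#s : ℝ) = ‖∑ c ∈ univ.erase 0, ψ (c * -t) * ∑ w ∈ s, ψ (c * f w)‖ := by
        rw [← norm_neg, ← hzero, Complex.norm_natCast]
    _ ≤ ∑ c ∈ univ.erase 0, ‖∑ w ∈ s, ψ (c * f w)‖ := by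
        refine (norm_sum_le _ _).trans_eq (sum_congr rfl fun c _ => ?_)
        rw [norm_mul, AddChar.norm_apply, one_mul]

end CommRing

section Field

variable {F : Type*} [Field F] [Fintype F] [DecidableEq F] {ψ : AddChar F ℂ}

lemma norm_sum_sum_mul_mul_sq_le (hψ : ψ.IsPrimitive) {c : F} (hc : c ≠ 0) (A B : Finset F) :
    ‖∑ x ∈ A, ∑ y ∈ B, ψ (c * (x * y))‖ ^ 2 ≤ Fintype.card F * #A * #B := by
  calc ‖∑ x ∈ A, ∑ y ∈ B, ψ (c * (x * y))‖ ^ 2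
      ≤ (∑ x ∈ A, ‖∑ y ∈ B, ψ (c * x * y)‖) ^ 2 := by
        simp_rw [mul_assoc]; gcongr; exact norm_sum_le _ _
    _ ≤ #A * ∑ x ∈ A, ‖∑ y ∈ B, ψ (c * x * y)‖ ^ 2 := sq_sum_le_card_mul_sum_sq
    _ ≤ #A * ∑ x : F, ‖∑ y ∈ B, ψ (c * x * y)‖ ^ 2 := by gcongr; exact subset_univ A
    _ = Fintype.card F * #A * #B := by
        rw [Fintype.sum_bijective (c * ·) (mulLeft_bijective₀ c hc) _
            (fun x => ‖∑ y ∈ B, ψ (x * y)‖ ^ 2) fun _ => rfl, sum_norm_sum_mul_sq hψ]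
        ring

lemma norm_prod_sum_sum_mul_mul_le {ι : Type*} [Fintype ι] (hψ : ψ.IsPrimitive) {c : F}
    (hc : c ≠ 0) (A B : ι → Finset F) :
    ‖∏ i, ∑ x ∈ A i, ∑ y ∈ B i, ψ (c * (x * y))‖ ≤
      √(∏ i, (Fintype.card F * #(A i) * #(B i) : ℝ)) := by
  refine Real.le_sqrt_of_sq_le ?_
  rw [norm_prod, ← prod_pow]
  exact prod_le_prod (fun _ _ => by positivity) fun i _ => norm_sum_sum_mul_mul_sq_le hψ hc _ _

end Field

end AddChar

open AddChar in
theorem exists_sum_mul_add_add_eq {F ι : Type*} [Field F] [Fintype F] [DecidableEq F]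
    [Fintype ι] [DecidableEq ι] (A B : ι → Finset F) (Z : Finset F)
    (h : Fintype.card F ^ (Fintype.card ι + 2) < (∏ i, #(A i) * #(B i)) * #Z ^ 2) (t : F) :
    ∃ g ∈ Fintype.piFinset (fun i => A i ×ˢ B i), ∃ z ∈ Z, ∃ z' ∈ Z,
      ∑ i, (g i).1 * (g i).2 + z + z' = t := by
  obtain ⟨ψ, hψ⟩ := exists_isPrimitive F
  set K : ℝ := ∏ i, (Fintype.card F * #(A i) * #(B i) : ℝ)
  set N : ℝ := (∏ i, #(A i) * #(B i) : ℕ) * #Z ^ 2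
  have hN : (Fintype.card F : ℝ) ^ (Fintype.card ι + 2) < N := by simp only [N]; exact_mod_cast h
  have hN0 : 0 < N := hN.trans_le' (by positivity)
  have hK0 : 0 ≤ K := by positivity
  have hK : K * (Fintype.card F * #Z) ^ 2 = (Fintype.card F : ℝ) ^ (Fintype.card ι + 2) * N := by
    simp only [K, N, mul_assoc, prod_mul_distrib, prod_const, card_univ]; push_cast; ring
  have hlt : ∑ c ∈ univ.erase 0, ‖∑ w ∈ Fintype.piFinset (fun i => A i ×ˢ B i) ×ˢ (Z ×ˢ Z),
      ψ (c * (∑ i, (w.1 i).1 * (w.1 i).2 + w.2.1 + w.2.2))‖ <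
      #(Fintype.piFinset (fun i => A i ×ˢ B i) ×ˢ (Z ×ˢ Z)) :=
    calc _ ≤ ∑ c ∈ univ.erase 0, √K * ‖∑ z ∈ Z, ψ (c * z)‖ ^ 2 := by
          refine sum_le_sum fun c hc => ?_
          rw [sum_piFinset_product_mul_sum_mul_add_add, norm_mul, norm_pow]
          gcongr
          exact norm_prod_sum_sum_mul_mul_le hψ (ne_of_mem_erase hc) A B
      _ ≤ √K * (Fintype.card F * #Z) := by
          rw [← mul_sum, ← sum_norm_sum_mul_sq hψ Z]
          exact mul_le_mul_of_nonneg_left (sum_le_sum_of_subset_of_nonneg (erase_subset _ _)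
            fun _ _ _ => by positivity) (Real.sqrt_nonneg _)
      _ < N := by
          refine lt_of_pow_lt_pow_left₀ 2 hN0.le ?_
          rw [mul_pow, Real.sq_sqrt hK0, hK, sq N]
          exact mul_lt_mul_of_pos_right hN hN0
      _ = #(Fintype.piFinset (fun i => A i ×ˢ B i) ×ˢ (Z ×ˢ Z)) := by
          simp only [N, card_product, Fintype.card_piFinset]; push_cast; ring
  obtain ⟨⟨g, z, z'⟩, hw, rfl⟩ := exists_mem_eq_of_sum_norm_lt hψ
    (Fintype.piFinset (fun i => A i ×ˢ B i) ×ˢ (Z ×ˢ Z))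
    (fun w => ∑ i, (w.1 i).1 * (w.1 i).2 + w.2.1 + w.2.2) hlt t
  simp only [mem_product] at hw
  exact ⟨g, hw.1, z, hw.2.1, z', hw.2.2, rfl⟩

theorem prod_mul_prod_mul_sq_le {ι : Type*} [Fintype ι] {q z : ℕ} {x y a b : ι → ℕ}
    (hx : ∀ i, x i ^ 2 ≤ q * a i) (hy : ∀ i, y i ^ 2 ≤ q * b i) :
    ((∏ i, x i) * ((∏ i, y i) * z)) ^ 2 ≤
      q ^ (2 * Fintype.card ι) * ((∏ i, a i * b i) * z ^ 2) :=
  calc ((∏ i, x i) * ((∏ i, y i) * z)) ^ 2 = (∏ i, x i ^ 2 * y i ^ 2) * z ^ 2 := by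
        simp only [prod_mul_distrib, prod_pow]; ring
    _ ≤ (∏ i, (q * a i) * (q * b i)) * z ^ 2 := by
        gcongr with i
        exacts [hx i, hy i]
    _ = q ^ (2 * Fintype.card ι) * ((∏ i, a i * b i) * z ^ 2) := by
        simp only [prod_mul_distrib, prod_const, card_univ]; ring

theorem pow_lt_sq_of_rpow_lt {p m N : ℕ} {e : ℝ} (hp : 1 ≤ p) (he : (m : ℝ) ≤ 2 * e)
    (h : (p : ℝ) ^ e < N) : p ^ m < N ^ 2 := by
  have : (p : ℝ) ^ m < (N : ℝ) ^ 2 :=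
    calc (p : ℝ) ^ m = (p : ℝ) ^ (m : ℝ) := (Real.rpow_natCast _ _).symm
      _ ≤ (p : ℝ) ^ (e * 2) :=
          Real.rpow_le_rpow_of_exponent_le (by exact_mod_cast hp) (by linarith)
      _ = ((p : ℝ) ^ e) ^ 2 := Real.rpow_mul_natCast (by positivity) e 2
      _ < (N : ℝ) ^ 2 := by gcongr
  exact_mod_cast this

namespace Heis

variable {p n : ℕ} {X Y : Fin n → Finset (ZMod p)} {Z : Finset (ZMod p)} {B : Finset (Heis p n)}

lemma card_eq_of_forall_mem_iff
    (hB : ∀ g : Heis p n, g ∈ B ↔ (∀ i, g.1 i ∈ X i) ∧ (∀ i, g.2.1 i ∈ Y i) ∧ g.2.2 ∈ Z) :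
    #B = (∏ i, #(X i)) * ((∏ i, #(Y i)) * #Z) :=
  calc #B = #(Fintype.piFinset X ×ˢ Fintype.piFinset Y ×ˢ Z) :=
        card_equiv (Equiv.refl _) fun g =>
          (hB g).trans (by simp only [mem_product, Fintype.mem_piFinset]; rfl)
    _ = _ := by simp only [card_product, Fintype.card_piFinset]

lemma mk_mem_mul {a b u v : Fin n → ZMod p} {z z' : ZMod p}
    (h : ((u, b - v, z) : Heis p n) ∈ B) (h' : ((a - u, v, z') : Heis p n) ∈ B) :
    ((a, b, ∑ i, u i * v i + z + z') : Heis p n) ∈ B * B :=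
  -- without `α := Heis p n`, `α` is inferred as the underlying product type, whose `Mul` is
  -- componentwise
  Finset.mem_mul (α := Heis p n) |>.2
    ⟨_, h, _, h', (mul_def _ _).trans (by rw [add_sub_cancel, sub_add_cancel])⟩

end Heis

theorem stmt14_general (ε : ℝ) (hε : 0 < ε) (n : ℕ) (hn : 1 / (8 * ε) < (n : ℝ))
    (p : ℕ) [Fact p.Prime]
    (X Y : Fin n → Finset (ZMod p)) (Z : Finset (ZMod p))
    (B : Finset (Heis p n))
    (hB : ∀ g : Heis p n, g ∈ B ↔
      ((∀ i, g.1 i ∈ X i) ∧ (∀ i, g.2.1 i ∈ Y i) ∧ g.2.2 ∈ Z))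
    (hBcard : (p : ℝ) ^ (3 * (n : ℝ) / 2 + 3 / 4 + ε * (2 * (n : ℝ) + 1)) < (B.card : ℝ)) :
    ∃ a b : Fin n → ZMod p, ∀ z : ZMod p, ((a, b, z) : Heis p n) ∈ B * B := by
  choose a ha using fun i => exists_card_sq_le_card_mul_card_filter_sub_mem (X i)
  choose b hb using fun i => exists_card_sq_le_card_mul_card_filter_sub_mem (Y i)
  set X' := fun i => {x ∈ X i | a i - x ∈ X i}
  set Y' := fun i => {y ∈ Y i | b i - y ∈ Y i}
  rw [ZMod.card] at ha hb
  have hexp : ((3 * n + 2 : ℕ) : ℝ) ≤ 2 * (3 * (n : ℝ) / 2 + 3 / 4 + ε * (2 * (n : ℝ) + 1)) := by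
    have : 1 < n * (8 * ε) := (div_lt_iff₀ (by positivity)).mp hn
    push_cast; nlinarith
  have hbig : p ^ (n + 2) < (∏ i, #(X' i) * #(Y' i)) * #Z ^ 2 := by
    refine Nat.lt_of_mul_lt_mul_left (a := p ^ (2 * n)) ?_
    calc p ^ (2 * n) * p ^ (n + 2) = p ^ (3 * n + 2) := by ring
      _ < #B ^ 2 := pow_lt_sq_of_rpow_lt (Fact.out : p.Prime).one_lt.le hexp hBcard
      _ ≤ _ := by
          simpa only [Heis.card_eq_of_forall_mem_iff hB, Fintype.card_fin] using
            prod_mul_prod_mul_sq_le ha hb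
  refine ⟨a, b, fun t => ?_⟩
  obtain ⟨g, hg, z, hz, z', hz', rfl⟩ :=
    exists_sum_mul_add_add_eq X' Y' Z (by rwa [ZMod.card, Fintype.card_fin]) t
  simp only [X', Y', Fintype.mem_piFinset, mem_product, mem_filter] at hg
  refine Heis.mk_mem_mul (u := fun i => (g i).1) (v := fun i => (g i).2) ?_ ?_
  · exact (hB _).2 ⟨fun i => (hg i).1.1, fun i => (hg i).2.2, hz⟩
  · exact (hB _).2 ⟨fun i => (hg i).1.2, fun i => (hg i).2.1, hz'⟩

theorem stmt14 (ε : ℝ) (hε : 0 < ε) (n : ℕ) (hn : 1 / (8 * ε) < (n : ℝ))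
    (p : ℕ) [Fact p.Prime]
    (X Y : Fin n → Finset (ZMod p)) (Z : Finset (ZMod p))
    (hX : ∀ i, (X i).Nonempty) (hY : ∀ i, (Y i).Nonempty) (hZ : Z.Nonempty)
    (hX0 : ∀ i, (0 : ZMod p) ∉ X i) (hY0 : ∀ i, (0 : ZMod p) ∉ Y i)
    (B : Finset (Heis p n))
    (hB : ∀ g : Heis p n, g ∈ B ↔
      ((∀ i, g.1 i ∈ X i) ∧ (∀ i, g.2.1 i ∈ Y i) ∧ g.2.2 ∈ Z))
    (hBcard : (p : ℝ) ^ (3 * (n : ℝ) / 2 + 3 / 4 + ε * (2 * (n : ℝ) + 1)) < (B.card : ℝ)) :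
    ∃ a b : Fin n → ZMod p, ∀ z : ZMod p, ((a, b, z) : Heis p n) ∈ B * B :=
  stmt14_general ε hε n hn p X Y Z B hB hBcard
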